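/- Let n be a positive integer, G a real n×n matrix, b ∈ ℝⁿ, and λ ≥ 0. Define the robust objective J(x) = sup{ ‖(G + E)x − (b + e)‖₂ : ‖E‖_F ≤ λ, ‖e‖₂ ≤ λ } and the regularized objective R(x) = ‖Gx − b‖₂ + λ‖x‖₂. Then J(x) = R(x) + λ for every x ∈ ℝⁿ, and consequently the infimum over x ∈ ℝⁿ of J equals the infimum over x ∈ ℝⁿ of R plus λ. -/

import Mathlib

/-- Euclidean norm of a vector in ℝⁿ. -/
noncomputable def eNorm {n : ℕ} (v : Fin n → ℝ) : ℝ :=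
  Real.sqrt (∑ i, v i ^ 2)

/-- Frobenius norm of a real matrix. -/
noncomputable def fNorm {m n : ℕ} (M : Matrix (Fin m) (Fin n) ℝ) : ℝ :=
  Real.sqrt (∑ i, ∑ j, M i j ^ 2)

/-- The robust objective: worst-case residual over Frobenius-bounded matrix
perturbations and Euclidean-bounded vector perturbations. -/
noncomputable def robustObj {n : ℕ} (G : Matrix (Fin n) (Fin n) ℝ)
    (b : Fin n → ℝ) (lam : ℝ) (x : Fin n → ℝ) : ℝ :=
  sSup {r : ℝ | ∃ (E : Matrix (Fin n) (Fin n) ℝ) (e : Fin n → ℝ),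
      fNorm E ≤ lam ∧ eNorm e ≤ lam ∧
      r = eNorm ((G + E).mulVec x - (b + e))}

/-- The regularized objective ‖Gx − b‖₂ + λ‖x‖₂. -/
noncomputable def regObj {n : ℕ} (G : Matrix (Fin n) (Fin n) ℝ)
    (b : Fin n → ℝ) (lam : ℝ) (x : Fin n → ℝ) : ℝ :=
  eNorm (G.mulVec x - b) + lam * eNorm x

/-!
By the triangle inequality and Cauchy–Schwarz (`‖E x‖ ≤ ‖E‖_F ‖x‖`), every perturbed residual
is at most `‖G x - b‖ + λ ‖x‖ + λ`. Conversely, the rank-one matrices `v xᵀ / ‖x‖²` show that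
`E ↦ E x` maps the Frobenius `λ`-ball onto the Euclidean `λ ‖x‖`-ball, so the bound is attained
by taking `E x = λ ‖x‖ u` and `e = -λ u` for a unit vector `u` pointing along `G x - b` (any unit
vector if `G x = b`). The statement about infima is the pointwise identity translated by `λ`.
-/

open Matrix

section NormedSpace

variable {V : Type*} [NormedAddCommGroup V] [NormedSpace ℝ V] [Nontrivial V]

lemma exists_norm_eq_one_smul_eq (r : V) : ∃ u : V, ‖u‖ = 1 ∧ ‖r‖ • u = r := by
  by_cases hr : r = 0
  · obtain ⟨u, hu⟩ := exists_norm_eq V zero_le_one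
    exact ⟨u, hu, by simp [hr]⟩
  · exact ⟨NormedSpace.normalize r, NormedSpace.norm_normalize hr,
      NormedSpace.norm_smul_normalize r⟩

theorem isGreatest_norm_add_sub (r : V) {a c : ℝ} (ha : 0 ≤ a) (hc : 0 ≤ c) :
    IsGreatest {t | ∃ p q : V, ‖p‖ ≤ a ∧ ‖q‖ ≤ c ∧ t = ‖r + p - q‖} (‖r‖ + a + c) := by
  obtain ⟨u, hu, hru⟩ := exists_norm_eq_one_smul_eq r
  refine ⟨⟨a • u, -(c • u), by simp [norm_smul, hu, abs_of_nonneg ha],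
    by simp [norm_smul, hu, abs_of_nonneg hc], ?_⟩, ?_⟩
  · have hsum : r + a • u - -(c • u) = (‖r‖ + a + c) • u := by
      rw [add_smul, add_smul, hru]; abel
    rw [hsum, norm_smul, hu, mul_one, Real.norm_of_nonneg (by positivity)]
  · rintro t ⟨p, q, hp, hq, rfl⟩
    calc ‖r + p - q‖ ≤ ‖r + p‖ + ‖q‖ := norm_sub_le _ _
      _ ≤ ‖r‖ + ‖p‖ + ‖q‖ := by gcongr; exact norm_add_le _ _
      _ ≤ ‖r‖ + a + c := by gcongr

end NormedSpace

section EuclideanNorms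

variable {m n : ℕ}

lemma eNorm_eq_norm (v : Fin n → ℝ) : eNorm v = ‖WithLp.toLp 2 v‖ := by
  simp [eNorm, EuclideanSpace.norm_eq]

lemma eNorm_sq (v : Fin n → ℝ) : eNorm v ^ 2 = v ⬝ᵥ v := by
  rw [eNorm, Real.sq_sqrt (by positivity)]
  simp [dotProduct, sq]

lemma eNorm_mulVec_le (E : Matrix (Fin m) (Fin n) ℝ) (x : Fin n → ℝ) :
    eNorm (E *ᵥ x) ≤ fNorm E * eNorm x := by
  rw [eNorm, fNorm, eNorm, ← Real.sqrt_mul (by positivity), Finset.sum_mul]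
  gcongr with i
  simpa only [mulVec, dotProduct] using Finset.sum_mul_sq_le_sq_mul_sq _ (E i) x

lemma fNorm_vecMulVec (u : Fin m → ℝ) (x : Fin n → ℝ) :
    fNorm (vecMulVec u x) = eNorm u * eNorm x := by
  rw [fNorm, eNorm, eNorm, ← Real.sqrt_mul (by positivity), Finset.sum_mul_sum]
  simp [vecMulVec, mul_pow]

lemma exists_fNorm_le_mulVec_eq {c : ℝ} (hc : 0 ≤ c) {x : Fin n → ℝ} {v : Fin m → ℝ}
    (hv : eNorm v ≤ c * eNorm x) : ∃ E : Matrix (Fin m) (Fin n) ℝ, fNorm E ≤ c ∧ E *ᵥ x = v := by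
  by_cases hx : x = 0
  · refine ⟨0, by simpa [fNorm] using hc, ?_⟩
    have hv0 : v = 0 := by simpa [eNorm_eq_norm, hx] using hv
    simp [hv0]
  · have hx' : 0 < eNorm x := by simpa [eNorm_eq_norm] using hx
    refine ⟨vecMulVec ((eNorm x ^ 2)⁻¹ • v) x, ?_, ?_⟩
    · rw [fNorm_vecMulVec, eNorm_eq_norm, WithLp.toLp_smul, norm_smul, ← eNorm_eq_norm,
        Real.norm_of_nonneg (by positivity)]
      calc _ = eNorm v / eNorm x := by field_simp
        _ ≤ c := (div_le_iff₀ hx').2 hv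
    · rw [vecMulVec_mulVec, ← eNorm_sq, op_smul_eq_smul, smul_smul,
        mul_inv_cancel₀ (by positivity), one_smul]

end EuclideanNorms

theorem robustObj_eq_regObj_add {n : ℕ} (hn : 0 < n) (G : Matrix (Fin n) (Fin n) ℝ)
    (b : Fin n → ℝ) {lam : ℝ} (hlam : 0 ≤ lam) (x : Fin n → ℝ) :
    robustObj G b lam x = regObj G b lam x + lam := by
  have : Nonempty (Fin n) := ⟨⟨0, hn⟩⟩
  have hres (E : Matrix (Fin n) (Fin n) ℝ) (e : Fin n → ℝ) :
      (G + E) *ᵥ x - (b + e) = (G *ᵥ x - b) + E *ᵥ x - e := by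
    rw [add_mulVec]; abel
  have hmax := isGreatest_norm_add_sub (WithLp.toLp 2 (G *ᵥ x - b))
    (mul_nonneg hlam (norm_nonneg (WithLp.toLp 2 x))) hlam
  rw [robustObj, regObj, eNorm_eq_norm (G *ᵥ x - b), eNorm_eq_norm x, ← hmax.csSup_eq]
  congr 1
  ext t
  constructor
  · rintro ⟨E, e, hE, he, rfl⟩
    refine ⟨WithLp.toLp 2 (E *ᵥ x), WithLp.toLp 2 e, ?_, by rwa [← eNorm_eq_norm], ?_⟩
    · rw [← eNorm_eq_norm, ← eNorm_eq_norm]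
      exact (eNorm_mulVec_le E x).trans (mul_le_mul_of_nonneg_right hE (Real.sqrt_nonneg _))
    · rw [eNorm_eq_norm, hres, WithLp.toLp_sub, WithLp.toLp_add]
  · rintro ⟨p, q, hp, hq, rfl⟩
    obtain ⟨E, hE, hEx⟩ := exists_fNorm_le_mulVec_eq hlam (v := p.ofLp) (x := x)
      (by rwa [eNorm_eq_norm, eNorm_eq_norm])
    refine ⟨E, q.ofLp, hE, by rwa [eNorm_eq_norm], ?_⟩
    rw [eNorm_eq_norm, hres, hEx]
    simp

/-- The robust objective equals the regularized objective plus λ pointwise, and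
hence their infima over x differ by exactly λ. -/
theorem robust_eq_regularized_plus_lambda (n : ℕ) (hn : 0 < n)
    (G : Matrix (Fin n) (Fin n) ℝ) (b : Fin n → ℝ) (lam : ℝ) (hlam : 0 ≤ lam) :
    (∀ x : Fin n → ℝ, robustObj G b lam x = regObj G b lam x + lam) ∧
    sInf (Set.range (robustObj G b lam)) =
      sInf (Set.range (regObj G b lam)) + lam := by
  have hpt := robustObj_eq_regObj_add hn G b hlam
  have hbdd : BddBelow (Set.range (regObj G b lam)) :=
    ⟨0, Set.forall_mem_range.2 fun x => by rw [regObj, eNorm_eq_norm, eNorm_eq_norm]; positivity⟩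
  refine ⟨hpt, ?_⟩
  rw [show robustObj G b lam = fun x => regObj G b lam x + lam from funext hpt]
  exact ((OrderIso.addRight lam).map_ciInf hbdd).symm
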